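/- For the broadcast process on the k-ary tree of depth d with parameter θ satisfying kθ² > 2, by symmetry P[Σ_{i=1}^{k^d} X^(d)_i ≥ k^d/2 | X^(0) = 0] ≤ 1/(θ²k - 1). -/

import Mathlib

open Finset

/-- Outcome space for the broadcast process on the `k`-ary tree of depth `d`:
a root label together with, for each non-root vertex (at level `i+1`, indexed by
`Fin (k ^ (i+1))`), a flip indicator for the edge into it (`true` means the
label is flipped relative to the parent's label). -/
abbrev BOmega (k d : ℕ) := Bool × ∀ i : Fin d, Fin (k ^ ((i : ℕ) + 1)) → Bool

/-- The ancestor at level `i+1` of the leaf `v` (a vertex at level `d`). -/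
def anc (k d : ℕ) (v : Fin (k ^ d)) (i : Fin d) : Fin (k ^ ((i : ℕ) + 1)) :=
  ⟨(v : ℕ) / k ^ (d - ((i : ℕ) + 1)), by
    rcases Nat.eq_zero_or_pos k with hk | hk
    · subst hk
      have hd : 0 < d := i.pos
      exact absurd v.isLt (by simp [Nat.zero_pow hd])
    · have h1 : (i : ℕ) + 1 ≤ d := i.isLt
      refine Nat.div_lt_of_lt_mul ?_
      have h2 : k ^ ((i : ℕ) + 1) * k ^ (d - ((i : ℕ) + 1)) = k ^ d := by
        rw [← pow_add]; congr 1; omega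
      rw [mul_comm, h2]; exact v.isLt⟩

/-- The weight (probability) of an outcome of the broadcast process with
parameter `θ`: the root label is uniform, and each flip indicator is
independently `true` with probability `(1-θ)/2` (so each vertex copies its
parent's label with probability `(1+θ)/2`). -/
noncomputable def bwt (θ : ℝ) {k d : ℕ} (ω : BOmega k d) : ℝ :=
  (1 / 2) * ∏ i : Fin d, ∏ e : Fin (k ^ ((i : ℕ) + 1)),
    (if ω.2 i e then (1 - θ) / 2 else (1 + θ) / 2)

/-- The label `X^(d)_v` of the leaf `v`: the root label, flipped once for every
flipped edge on the path from the root down to `v`. -/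
def leafLabel {k d : ℕ} (ω : BOmega k d) (v : Fin (k ^ d)) : Bool :=
  xor ω.1 (decide ((univ.filter fun i : Fin d => ω.2 i (anc k d v i)).card % 2 = 1))

open Classical in
/-- Probability of an event under the broadcast process with parameter `θ`. -/
noncomputable def bPr (θ : ℝ) (k d : ℕ) (A : BOmega k d → Prop) : ℝ :=
  ∑ ω : BOmega k d, if A ω then bwt θ ω else 0

/-- The number of leaves labeled `1` (i.e. `true`). -/
def leafCount {k d : ℕ} (ω : BOmega k d) : ℕ :=
  (univ.filter fun v : Fin (k ^ d) => leafLabel ω v = true).card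

/-! ### Auxiliary development -/

abbrev BO2 (k d : ℕ) := ∀ i : Fin d, Fin (k ^ ((i : ℕ) + 1)) → Bool

noncomputable def Wt (θ : ℝ) {k d : ℕ} (ω : BO2 k d) : ℝ :=
  ∏ i, ∏ e, (if ω i e then (1 - θ) / 2 else (1 + θ) / 2)

noncomputable def sgn (b : Bool) : ℝ := if b then -1 else 1

noncomputable def sig {k d : ℕ} (v : Fin (k ^ d)) (ω : BO2 k d) : ℝ :=
  ∏ i, sgn (ω i (anc k d v i))

noncomputable def Ysum {k d : ℕ} (ω : BO2 k d) : ℝ := ∑ v, sig v ω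

lemma sum_pi_prod {m : ℕ} {β : Fin m → Type*} [∀ i, Fintype (β i)] [∀ i, DecidableEq (β i)]
    (F : ∀ i, β i → ℝ) :
    ∑ ω : ∀ i, β i, ∏ i, F i (ω i) = ∏ i, ∑ b, F i b := by
  rw [Finset.prod_univ_sum (fun _ => univ) F, Fintype.piFinset_univ]

lemma sum_prod_prod {k d : ℕ} (G : ∀ i : Fin d, Fin (k ^ ((i : ℕ) + 1)) → Bool → ℝ) :
    ∑ ω : BO2 k d, ∏ i, ∏ e, G i e (ω i e)
      = ∏ i, ∏ e, (G i e true + G i e false) := by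
  refine (sum_pi_prod (β := fun i : Fin d => Fin (k ^ ((i : ℕ) + 1)) → Bool)
      (fun i f => ∏ e, G i e (f e))).trans (Finset.prod_congr rfl fun i _ => ?_)
  exact (sum_pi_prod (β := fun _ : Fin (k ^ ((i : ℕ) + 1)) => Bool)
      (fun e b => G i e b)).trans (Finset.prod_congr rfl fun e _ => Fintype.sum_bool _)

lemma EW {k d : ℕ} (θ : ℝ) : ∑ ω : BO2 k d, Wt θ ω = 1 := by
  calc ∑ ω : BO2 k d, Wt θ ω
      = ∏ i : Fin d, ∏ e : Fin (k ^ ((i : ℕ) + 1)),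
        ((if (true : Bool) then (1 - θ) / 2 else (1 + θ) / 2)
          + (if (false : Bool) then (1 - θ) / 2 else (1 + θ) / 2)) :=
        sum_prod_prod (fun i e b => if b then (1 - θ) / 2 else (1 + θ) / 2)
    _ = 1 := by
        have h : ((1 - θ) / 2 + (1 + θ) / 2) = 1 := by ring
        simp [h]

lemma Esig {k d : ℕ} (θ : ℝ) (v : Fin (k ^ d)) :
    ∑ ω : BO2 k d, Wt θ ω * sig v ω = θ ^ d := by
  have hv : ∀ ω : BO2 k d, sig v ω
      = ∏ i, ∏ e, (if e = anc k d v i then sgn (ω i e) else 1) := by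
    intro ω
    rw [sig]
    refine Finset.prod_congr rfl fun i _ => ?_
    rw [Finset.prod_ite_eq' univ (anc k d v i) (fun e => sgn (ω i e))]; simp
  have hpt : ∀ ω : BO2 k d, Wt θ ω * sig v ω
      = ∏ i, ∏ e, ((if ω i e then (1 - θ) / 2 else (1 + θ) / 2) *
          (if e = anc k d v i then sgn (ω i e) else 1)) := by
    intro ω
    rw [Wt, hv, ← Finset.prod_mul_distrib]
    exact Finset.prod_congr rfl fun i _ => (Finset.prod_mul_distrib).symm
  calc ∑ ω : BO2 k d, Wt θ ω * sig v ω
      = ∑ ω : BO2 k d, ∏ i, ∏ e, ((if ω i e then (1 - θ) / 2 else (1 + θ) / 2) *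
          (if e = anc k d v i then sgn (ω i e) else 1)) :=
        Finset.sum_congr rfl fun ω _ => hpt ω
    _ = ∏ i : Fin d, ∏ e : Fin (k ^ ((i : ℕ) + 1)),
        (((if (true : Bool) then (1 - θ) / 2 else (1 + θ) / 2) *
            (if e = anc k d v i then sgn true else 1)) +
         ((if (false : Bool) then (1 - θ) / 2 else (1 + θ) / 2) *
            (if e = anc k d v i then sgn false else 1))) :=
        sum_prod_prod (fun i e b => (if b then (1 - θ) / 2 else (1 + θ) / 2) *
          (if e = anc k d v i then sgn b else 1))
    _ = θ ^ d := by
        have hi : ∀ i : Fin d, (∏ e : Fin (k ^ ((i : ℕ) + 1)),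
            (((if (true : Bool) then (1 - θ) / 2 else (1 + θ) / 2) *
                (if e = anc k d v i then sgn true else 1)) +
             ((if (false : Bool) then (1 - θ) / 2 else (1 + θ) / 2) *
                (if e = anc k d v i then sgn false else 1)))) = θ := by
          intro i
          have he : ∀ e : Fin (k ^ ((i : ℕ) + 1)),
              (((if (true : Bool) then (1 - θ) / 2 else (1 + θ) / 2) *
                  (if e = anc k d v i then sgn true else 1)) +
               ((if (false : Bool) then (1 - θ) / 2 else (1 + θ) / 2) *
                  (if e = anc k d v i then sgn false else 1)))
                = if e = anc k d v i then θ else 1 := by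
            intro e; simp only [sgn]; split_ifs <;> first | ring1 | exact (‹False›).elim | exact absurd trivial ‹¬True›
          rw [Finset.prod_congr rfl fun e _ => he e,
            Finset.prod_ite_eq' univ (anc k d v i) (fun _ => θ)]
          simp
        rw [Finset.prod_congr rfl fun i _ => hi i]
        simp

lemma Esig2 {k d : ℕ} (θ : ℝ) (u v : Fin (k ^ d)) :
    ∑ ω : BO2 k d, Wt θ ω * (sig u ω * sig v ω)
      = (θ ^ 2) ^ (univ.filter fun i : Fin d => ¬ (anc k d u i = anc k d v i)).card := by
  have hgen : ∀ w : Fin (k ^ d), ∀ ω : BO2 k d, sig w ω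
      = ∏ i, ∏ e, (if e = anc k d w i then sgn (ω i e) else 1) := by
    intro w ω
    rw [sig]
    refine Finset.prod_congr rfl fun i _ => ?_
    rw [Finset.prod_ite_eq' univ (anc k d w i) (fun e => sgn (ω i e))]; simp
  have hpt : ∀ ω : BO2 k d, Wt θ ω * (sig u ω * sig v ω)
      = ∏ i, ∏ e, ((if ω i e then (1 - θ) / 2 else (1 + θ) / 2) *
          ((if e = anc k d u i then sgn (ω i e) else 1) *
           (if e = anc k d v i then sgn (ω i e) else 1))) := by
    intro ω
    rw [Wt, hgen u, hgen v, ← Finset.prod_mul_distrib, ← Finset.prod_mul_distrib]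
    refine Finset.prod_congr rfl fun i _ => ?_
    rw [← Finset.prod_mul_distrib, ← Finset.prod_mul_distrib]
  calc ∑ ω : BO2 k d, Wt θ ω * (sig u ω * sig v ω)
      = ∑ ω : BO2 k d, ∏ i, ∏ e, ((if ω i e then (1 - θ) / 2 else (1 + θ) / 2) *
          ((if e = anc k d u i then sgn (ω i e) else 1) *
           (if e = anc k d v i then sgn (ω i e) else 1))) :=
        Finset.sum_congr rfl fun ω _ => hpt ω
    _ = ∏ i : Fin d, ∏ e : Fin (k ^ ((i : ℕ) + 1)),
        (((if (true : Bool) then (1 - θ) / 2 else (1 + θ) / 2) *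
            ((if e = anc k d u i then sgn true else 1) *
             (if e = anc k d v i then sgn true else 1))) +
         ((if (false : Bool) then (1 - θ) / 2 else (1 + θ) / 2) *
            ((if e = anc k d u i then sgn false else 1) *
             (if e = anc k d v i then sgn false else 1)))) :=
        sum_prod_prod (fun i e b => (if b then (1 - θ) / 2 else (1 + θ) / 2) *
          ((if e = anc k d u i then sgn b else 1) * (if e = anc k d v i then sgn b else 1)))
    _ = (θ ^ 2) ^ (univ.filter fun i : Fin d => ¬ (anc k d u i = anc k d v i)).card := by
        have hlvl : ∀ i : Fin d, (∏ e : Fin (k ^ ((i : ℕ) + 1)),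
            (((if (true : Bool) then (1 - θ) / 2 else (1 + θ) / 2) *
                ((if e = anc k d u i then sgn true else 1) *
                 (if e = anc k d v i then sgn true else 1))) +
             ((if (false : Bool) then (1 - θ) / 2 else (1 + θ) / 2) *
                ((if e = anc k d u i then sgn false else 1) *
                 (if e = anc k d v i then sgn false else 1)))))
            = if anc k d u i = anc k d v i then 1 else θ ^ 2 := by
          intro i
          by_cases h : anc k d u i = anc k d v i
          · rw [if_pos h]
            refine Finset.prod_eq_one fun e _ => ?_
            simp only [sgn, ← h]
            split_ifs <;> first | ring1 | exact (‹False›).elim | exact absurd trivial ‹¬True›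
          · rw [if_neg h]
            have he : ∀ e : Fin (k ^ ((i : ℕ) + 1)),
                (((if (true : Bool) then (1 - θ) / 2 else (1 + θ) / 2) *
                    ((if e = anc k d u i then sgn true else 1) *
                     (if e = anc k d v i then sgn true else 1))) +
                 ((if (false : Bool) then (1 - θ) / 2 else (1 + θ) / 2) *
                    ((if e = anc k d u i then sgn false else 1) *
                     (if e = anc k d v i then sgn false else 1))))
                  = (if e = anc k d u i then θ else 1) * (if e = anc k d v i then θ else 1) := by
              intro e
              simp only [sgn]
              split_ifs <;> first | ring1 | exact (‹False›).elim | exact absurd trivial ‹¬True› | exact absurd ((‹e = anc k d u i›).symm.trans ‹e = anc k d v i›) h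
            rw [Finset.prod_congr rfl fun e _ => he e, Finset.prod_mul_distrib,
              Finset.prod_ite_eq' univ (anc k d u i) (fun _ => θ),
              Finset.prod_ite_eq' univ (anc k d v i) (fun _ => θ)]
            simp [sq]
        rw [Finset.prod_congr rfl fun i _ => hlvl i,
          ← Finset.prod_filter_mul_prod_filter_not univ (fun i => anc k d u i = anc k d v i)]
        rw [Finset.prod_eq_one (fun i hi => if_pos (Finset.mem_filter.mp hi).2), one_mul]
        rw [Finset.prod_congr rfl (fun i hi => if_neg (Finset.mem_filter.mp hi).2),
          Finset.prod_const]

lemma div_agree_mono {k a b j r : ℕ} (h : j ≤ r) (hj : a / k ^ j = b / k ^ j) :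
    a / k ^ r = b / k ^ r := by
  have hk : k ^ r = k ^ j * k ^ (r - j) := by rw [← pow_add]; congr 1; omega
  rw [hk, ← Nat.div_div_eq_div_mul, ← Nat.div_div_eq_div_mul, hj]

lemma card_div_fiber {k d : ℕ} (hk : 0 < k) (u : Fin (k ^ d)) {r : ℕ} (hr : r ≤ d) :
    (univ.filter fun v : Fin (k ^ d) => (v : ℕ) / k ^ r = (u : ℕ) / k ^ r).card = k ^ r := by
  have hkr : 0 < k ^ r := pow_pos hk r
  have hdiv : (u : ℕ) / k ^ r < k ^ (d - r) := by
    apply Nat.div_lt_of_lt_mul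
    calc (u : ℕ) < k ^ d := u.isLt
      _ = k ^ r * k ^ (d - r) := by rw [← pow_add]; congr 1; omega
  have hub : ((u : ℕ) / k ^ r) * k ^ r + k ^ r ≤ k ^ d := by
    calc ((u : ℕ) / k ^ r) * k ^ r + k ^ r = ((u : ℕ) / k ^ r + 1) * k ^ r := by ring
      _ ≤ k ^ (d - r) * k ^ r := Nat.mul_le_mul_right _ hdiv
      _ = k ^ d := by rw [← pow_add]; congr 1; omega
  have key : (univ.filter fun v : Fin (k ^ d) => (v : ℕ) / k ^ r = (u : ℕ) / k ^ r).card
      = (range (k ^ r)).card := by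
    refine Finset.card_bij' (fun v _ => (v : ℕ) % k ^ r)
      (fun w hw => (⟨((u : ℕ) / k ^ r) * k ^ r + w, by
        have : w < k ^ r := Finset.mem_range.mp hw
        omega⟩ : Fin (k ^ d))) ?_ ?_ ?_ ?_
    · intro v _
      exact Finset.mem_range.mpr (Nat.mod_lt _ hkr)
    · intro w hw
      refine Finset.mem_filter.mpr ⟨Finset.mem_univ _, ?_⟩
      show (((u : ℕ) / k ^ r) * k ^ r + w) / k ^ r = (u : ℕ) / k ^ r
      rw [mul_comm, Nat.mul_add_div hkr, Nat.div_eq_of_lt (Finset.mem_range.mp hw), add_zero]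
    · intro v hv
      have hv' := (Finset.mem_filter.mp hv).2
      apply Fin.ext
      show ((u : ℕ) / k ^ r) * k ^ r + (v : ℕ) % k ^ r = (v : ℕ)
      rw [← hv', mul_comm]
      exact Nat.div_add_mod _ _
    · intro w hw
      show (((u : ℕ) / k ^ r) * k ^ r + w) % k ^ r = w
      rw [mul_comm, Nat.mul_add_mod]
      exact Nat.mod_eq_of_lt (Finset.mem_range.mp hw)
  rw [key, Finset.card_range]

lemma sum_theta_pow {k d : ℕ} (hk : 0 < k) (t2 : ℝ) (u : Fin (k ^ d)) :
    ∀ r ≤ d, (∑ v ∈ univ.filter (fun v : Fin (k ^ d) => (v : ℕ) / k ^ r = (u : ℕ) / k ^ r),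
        ∏ j ∈ range d, (if (u : ℕ) / k ^ j = (v : ℕ) / k ^ j then 1 else t2))
      = 1 + ∑ s ∈ range r, ((k : ℝ) ^ (s + 1) - (k : ℝ) ^ s) * t2 ^ (s + 1) := by
  intro r
  induction r with
  | zero =>
    intro _
    have hfilter : (univ.filter fun v : Fin (k ^ d) =>
        (v : ℕ) / k ^ 0 = (u : ℕ) / k ^ 0) = {u} := by
      ext v
      simp [Fin.ext_iff]
    rw [hfilter, Finset.sum_singleton]
    simp
  | succ r ih =>
    intro hr1
    have hr : r ≤ d := by omega
    have hsub : (univ.filter fun v : Fin (k ^ d) => (v : ℕ) / k ^ r = (u : ℕ) / k ^ r)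
        ⊆ (univ.filter fun v : Fin (k ^ d) =>
            (v : ℕ) / k ^ (r + 1) = (u : ℕ) / k ^ (r + 1)) := by
      intro v hv
      have h := (Finset.mem_filter.mp hv).2
      exact Finset.mem_filter.mpr ⟨Finset.mem_univ _, div_agree_mono (Nat.le_succ r) h⟩
    rw [← Finset.sum_sdiff hsub, ih hr]
    have hterm : ∀ v ∈ (univ.filter fun v : Fin (k ^ d) =>
          (v : ℕ) / k ^ (r + 1) = (u : ℕ) / k ^ (r + 1)) \
        (univ.filter fun v : Fin (k ^ d) => (v : ℕ) / k ^ r = (u : ℕ) / k ^ r),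
        (∏ j ∈ range d, (if (u : ℕ) / k ^ j = (v : ℕ) / k ^ j then 1 else t2)) = t2 ^ (r + 1) := by
      intro v hv
      obtain ⟨hvB, hvA⟩ := Finset.mem_sdiff.mp hv
      have hvB' := (Finset.mem_filter.mp hvB).2
      have hvA' : ¬ ((v : ℕ) / k ^ r = (u : ℕ) / k ^ r) := fun hc =>
        hvA (Finset.mem_filter.mpr ⟨Finset.mem_univ _, hc⟩)
      have hsplit : (∏ j ∈ Finset.Ico 0 (r + 1),
            (if (u : ℕ) / k ^ j = (v : ℕ) / k ^ j then 1 else t2)) *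
          (∏ j ∈ Finset.Ico (r + 1) d, (if (u : ℕ) / k ^ j = (v : ℕ) / k ^ j then 1 else t2))
          = ∏ j ∈ range d, (if (u : ℕ) / k ^ j = (v : ℕ) / k ^ j then 1 else t2) := by
        rw [Finset.range_eq_Ico]
        exact Finset.prod_Ico_consecutive _ (by omega) hr1
      rw [← hsplit]
      have h1 : ∀ j ∈ Finset.Ico 0 (r + 1),
          (if (u : ℕ) / k ^ j = (v : ℕ) / k ^ j then 1 else t2) = t2 := by
        intro j hj
        have hjr : j ≤ r := by have := Finset.mem_Ico.mp hj; omega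
        rw [if_neg]
        intro hc
        exact hvA' (div_agree_mono hjr hc.symm)
      have h2 : ∀ j ∈ Finset.Ico (r + 1) d,
          (if (u : ℕ) / k ^ j = (v : ℕ) / k ^ j then 1 else t2) = 1 := by
        intro j hj
        have hjr : r + 1 ≤ j := (Finset.mem_Ico.mp hj).1
        rw [if_pos (div_agree_mono hjr hvB').symm]
      rw [Finset.prod_congr rfl h1, Finset.prod_congr rfl h2, Finset.prod_const,
        Finset.prod_const_one, mul_one, Nat.card_Ico]
      norm_num
    rw [Finset.sum_congr rfl hterm, Finset.sum_const, Finset.card_sdiff_of_subset hsub,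
      card_div_fiber hk u hr1, card_div_fiber hk u hr, Finset.sum_range_succ]
    have hle : k ^ r ≤ k ^ (r + 1) := Nat.pow_le_pow_right hk (Nat.le_succ r)
    rw [nsmul_eq_mul, Nat.cast_sub hle]
    push_cast
    ring

lemma Esum_u {k d : ℕ} (hk : 0 < k) (t2 : ℝ) (u : Fin (k ^ d)) :
    ∑ v : Fin (k ^ d), t2 ^ (univ.filter fun i : Fin d => ¬ (anc k d u i = anc k d v i)).card
      = 1 + ∑ s ∈ range d, ((k : ℝ) ^ (s + 1) - (k : ℝ) ^ s) * t2 ^ (s + 1) := by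
  have hcard : ∀ v : Fin (k ^ d),
      (univ.filter fun i : Fin d => ¬ (anc k d u i = anc k d v i)).card
        = ((range d).filter fun j => ¬ ((u : ℕ) / k ^ j = (v : ℕ) / k ^ j)).card := by
    intro v
    refine Finset.card_bij (fun i _ => d - ((i : ℕ) + 1)) ?_ ?_ ?_
    · intro i hi
      have hne := (Finset.mem_filter.mp hi).2
      have hid : (i : ℕ) < d := i.isLt
      refine Finset.mem_filter.mpr ⟨Finset.mem_range.mpr (show d - ((i : ℕ) + 1) < d by omega), ?_⟩
      intro hc
      exact hne (Fin.ext hc)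
    · intro i hi i' hi' hee
      have h1 : (i : ℕ) < d := i.isLt
      have h2 : (i' : ℕ) < d := i'.isLt
      have hee' : d - ((i : ℕ) + 1) = d - ((i' : ℕ) + 1) := hee
      exact Fin.ext (by omega)
    · intro j hj
      obtain ⟨hjd, hne⟩ := Finset.mem_filter.mp hj
      have hjd' := Finset.mem_range.mp hjd
      refine ⟨⟨d - (j + 1), by omega⟩, ?_, ?_⟩
      · refine Finset.mem_filter.mpr ⟨Finset.mem_univ _, ?_⟩
        intro hc
        apply hne
        have h2 : (u : ℕ) / k ^ (d - ((d - (j + 1)) + 1))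
            = (v : ℕ) / k ^ (d - ((d - (j + 1)) + 1)) := congrArg Fin.val hc
        rwa [show d - ((d - (j + 1)) + 1) = j by omega] at h2
      · show d - ((d - (j + 1)) + 1) = j
        omega
  have hprod : ∀ v : Fin (k ^ d),
      (∏ j ∈ range d, (if (u : ℕ) / k ^ j = (v : ℕ) / k ^ j then 1 else t2))
        = t2 ^ ((range d).filter fun j => ¬ ((u : ℕ) / k ^ j = (v : ℕ) / k ^ j)).card := by
    intro v
    rw [← Finset.prod_filter_mul_prod_filter_not (range d)
      (fun j => (u : ℕ) / k ^ j = (v : ℕ) / k ^ j)]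
    rw [Finset.prod_eq_one (fun j hj => if_pos (Finset.mem_filter.mp hj).2), one_mul,
      Finset.prod_congr rfl (fun j hj => if_neg (Finset.mem_filter.mp hj).2), Finset.prod_const]
  have huniv : (univ.filter fun v : Fin (k ^ d) => (v : ℕ) / k ^ d = (u : ℕ) / k ^ d) = univ := by
    refine Finset.filter_true_of_mem fun v _ => ?_
    rw [Nat.div_eq_of_lt v.isLt, Nat.div_eq_of_lt u.isLt]
  calc ∑ v : Fin (k ^ d), t2 ^ (univ.filter fun i : Fin d => ¬ (anc k d u i = anc k d v i)).card
      = ∑ v : Fin (k ^ d), ∏ j ∈ range d, (if (u : ℕ) / k ^ j = (v : ℕ) / k ^ j then 1 else t2) :=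
        Finset.sum_congr rfl fun v _ => by rw [hcard v, hprod v]
    _ = ∑ v ∈ univ.filter (fun v : Fin (k ^ d) => (v : ℕ) / k ^ d = (u : ℕ) / k ^ d),
        ∏ j ∈ range d, (if (u : ℕ) / k ^ j = (v : ℕ) / k ^ j then 1 else t2) := by rw [huniv]
    _ = _ := sum_theta_pow hk t2 u d le_rfl

lemma Ysum_eq {k d : ℕ} (ω₂ : BO2 k d) :
    Ysum ω₂ = (k ^ d : ℝ) - 2 * (leafCount ((false, ω₂) : BOmega k d) : ℝ) := by
  have hsig : ∀ v : Fin (k ^ d), sig v ω₂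
      = if leafLabel ((false, ω₂) : BOmega k d) v = true then (-1 : ℝ) else 1 := by
    intro v
    have hlab : leafLabel ((false, ω₂) : BOmega k d) v
        = decide ((univ.filter fun i : Fin d => ω₂ i (anc k d v i) = true).card % 2 = 1) := by
      rw [leafLabel]
      exact Bool.false_xor _
    have hprod : sig v ω₂
        = (-1 : ℝ) ^ (univ.filter fun i : Fin d => ω₂ i (anc k d v i) = true).card := by
      rw [sig, ← Finset.prod_filter_mul_prod_filter_not univ
        (fun i : Fin d => ω₂ i (anc k d v i) = true)]
      rw [Finset.prod_congr rfl (fun i hi => show sgn (ω₂ i (anc k d v i)) = -1 by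
          rw [sgn, if_pos (Finset.mem_filter.mp hi).2]),
        Finset.prod_congr rfl (fun i hi => show sgn (ω₂ i (anc k d v i)) = 1 by
          rw [sgn, if_neg (Finset.mem_filter.mp hi).2]),
        Finset.prod_const, Finset.prod_const_one, mul_one]
    rw [hprod, hlab]
    rcases Nat.even_or_odd (univ.filter fun i : Fin d => ω₂ i (anc k d v i) = true).card
      with he | ho
    · have h2 := Nat.even_iff.mp he
      rw [Even.neg_one_pow he]
      simp [h2]
    · have h2 := Nat.odd_iff.mp ho
      rw [Odd.neg_one_pow ho]
      simp [h2]
  have h1 : Ysum ω₂ = ∑ v : Fin (k ^ d),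
      (if leafLabel ((false, ω₂) : BOmega k d) v = true then (-1 : ℝ) else 1) :=
    Finset.sum_congr rfl fun v _ => hsig v
  rw [h1, Finset.sum_ite, Finset.sum_const, Finset.sum_const, nsmul_eq_mul, nsmul_eq_mul,
    mul_one]
  have hLM := Finset.card_filter_add_card_filter_not
    (s := (univ : Finset (Fin (k ^ d)))) (fun v => leafLabel ((false, ω₂) : BOmega k d) v = true)
  rw [Finset.card_univ, Fintype.card_fin] at hLM
  have hL : (univ.filter fun v : Fin (k ^ d) =>
      leafLabel ((false, ω₂) : BOmega k d) v = true).card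
      = leafCount ((false, ω₂) : BOmega k d) := rfl
  rw [hL] at hLM ⊢
  have := congrArg (fun m : ℕ => (m : ℝ)) hLM
  push_cast at this ⊢
  linarith

/-- For the broadcast process on the `k`-ary tree of depth `d`
with parameter `θ` satisfying `kθ² > 2`, by symmetry (flipping all labels is
measure preserving and exchanges the events `{X^(0)=0}` and `{X^(0)=1}`),
`P[Σ_{i=1}^{k^d} X^(d)_i ≥ k^d/2 | X^(0) = 0] ≤ 1/(θ²k - 1)`. -/
theorem chebyshev_majority_bound_symm (θ : ℝ) (hθ₁ : 0 ≤ θ) (hθ₂ : θ ≤ 1)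
    (k d : ℕ) (hkθ : 2 < (k : ℝ) * θ ^ 2) :
    bPr θ k d (fun ω => (k : ℝ) ^ d / 2 ≤ (leafCount ω : ℝ) ∧ ω.1 = false) /
        bPr θ k d (fun ω => ω.1 = false)
      ≤ 1 / (θ ^ 2 * k - 1) := by
  classical
  have hθ0 : 0 < θ := by
    rcases eq_or_lt_of_le hθ₁ with h | h
    · exfalso; rw [← h] at hkθ; norm_num at hkθ
    · exact h
  have hk2 : (2 : ℝ) < (k : ℝ) := by nlinarith
  have hk : 0 < k := by exact_mod_cast lt_trans (by norm_num : (0:ℝ) < 2) hk2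
  set q : ℝ := (k : ℝ) * θ ^ 2 with hqdef
  have hq : 2 < q := hkθ
  set n : ℝ := (k : ℝ) ^ d with hndef
  set μ : ℝ := n * θ ^ d with hμdef
  have hn : 0 < n := pow_pos (by linarith) d
  have hμ : 0 < μ := mul_pos hn (pow_pos hθ0 d)
  set S : ℝ := 1 + ∑ s ∈ range d, ((k : ℝ) ^ (s + 1) - (k : ℝ) ^ s) * (θ ^ 2) ^ (s + 1)
    with hSdef
  -- splitting sums over the product space
  have hsplit : ∀ A : BOmega k d → Prop, bPr θ k d A
      = (∑ ω₂ : BO2 k d, if A (true, ω₂) then bwt θ (true, ω₂) else 0)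
        + (∑ ω₂ : BO2 k d, if A (false, ω₂) then bwt θ (false, ω₂) else 0) := by
    intro A
    rw [bPr, Fintype.sum_prod_type, Fintype.sum_bool]
  have hbwt : ∀ ω₂ : BO2 k d, ∀ b, bwt θ (b, ω₂) = 1 / 2 * Wt θ ω₂ := fun _ _ => rfl
  have hden : bPr θ k d (fun ω => ω.1 = false) = 1 / 2 := by
    rw [hsplit]
    conv_lhs =>
      congr
      · enter [2, ω₂]
        rw [if_neg (show ¬ ((true, ω₂) : BOmega k d).1 = false by simp)]
      · enter [2, ω₂]
        rw [if_pos (show ((false, ω₂) : BOmega k d).1 = false from rfl), hbwt ω₂ false]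
    rw [Finset.sum_const_zero, zero_add, ← Finset.mul_sum, EW, mul_one]
  set P : ℝ := ∑ ω₂ : BO2 k d, if Ysum ω₂ ≤ 0 then Wt θ ω₂ else 0 with hPdef
  have hnum : bPr θ k d (fun ω => (k : ℝ) ^ d / 2 ≤ (leafCount ω : ℝ) ∧ ω.1 = false)
      = 1 / 2 * P := by
    have hiff : ∀ ω₂ : BO2 k d, (((k : ℝ) ^ d / 2 ≤ (leafCount ((false, ω₂) : BOmega k d) : ℝ)
        ∧ ((false, ω₂) : BOmega k d).1 = false)) ↔ Ysum ω₂ ≤ 0 := by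
      intro ω₂
      have hY := Ysum_eq ω₂
      constructor
      · rintro ⟨h, -⟩
        rw [hY]
        linarith
      · intro h
        rw [hY] at h
        exact ⟨by linarith, rfl⟩
    rw [hsplit]
    conv_lhs =>
      congr
      · enter [2, ω₂]
        rw [if_neg (show ¬ ((k : ℝ) ^ d / 2 ≤ (leafCount ((true, ω₂) : BOmega k d) : ℝ)
          ∧ ((true, ω₂) : BOmega k d).1 = false) by simp)]
    rw [Finset.sum_const_zero, zero_add, Finset.mul_sum]
    refine Finset.sum_congr rfl fun ω₂ _ => ?_
    by_cases h : Ysum ω₂ ≤ 0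
    · rw [if_pos ((hiff ω₂).mpr h), if_pos h, hbwt]
    · rw [if_neg (fun hc => h ((hiff ω₂).mp hc)), if_neg h, mul_zero]
  -- nonnegativity of weights
  have hW0 : ∀ ω₂ : BO2 k d, 0 ≤ Wt θ ω₂ := fun ω₂ =>
    Finset.prod_nonneg fun i _ => Finset.prod_nonneg fun e _ => by
      split_ifs <;> linarith
  -- first moment
  have hEY : ∑ ω₂ : BO2 k d, Wt θ ω₂ * Ysum ω₂ = μ := by
    calc ∑ ω₂ : BO2 k d, Wt θ ω₂ * Ysum ω₂
        = ∑ ω₂ : BO2 k d, ∑ v, Wt θ ω₂ * sig v ω₂ :=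
          Finset.sum_congr rfl fun ω₂ _ => by rw [Ysum, Finset.mul_sum]
      _ = ∑ v, ∑ ω₂ : BO2 k d, Wt θ ω₂ * sig v ω₂ := Finset.sum_comm
      _ = ∑ _v : Fin (k ^ d), θ ^ d := Finset.sum_congr rfl fun v _ => Esig θ v
      _ = μ := by
          rw [Finset.sum_const, nsmul_eq_mul, Finset.card_univ, Fintype.card_fin, hμdef, hndef]
          push_cast
          ring
  -- second moment
  have hEY2 : ∑ ω₂ : BO2 k d, Wt θ ω₂ * Ysum ω₂ ^ 2 = n * S := by
    calc ∑ ω₂ : BO2 k d, Wt θ ω₂ * Ysum ω₂ ^ 2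
        = ∑ ω₂ : BO2 k d, ∑ u, ∑ v, Wt θ ω₂ * (sig u ω₂ * sig v ω₂) := by
          refine Finset.sum_congr rfl fun ω₂ _ => ?_
          rw [Ysum, sq, Finset.sum_mul_sum, Finset.mul_sum]
          refine Finset.sum_congr rfl fun u _ => ?_
          rw [Finset.mul_sum]
      _ = ∑ u, ∑ ω₂ : BO2 k d, ∑ v, Wt θ ω₂ * (sig u ω₂ * sig v ω₂) := Finset.sum_comm
      _ = ∑ u, ∑ v, ∑ ω₂ : BO2 k d, Wt θ ω₂ * (sig u ω₂ * sig v ω₂) :=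
          Finset.sum_congr rfl fun u _ => Finset.sum_comm
      _ = ∑ _u : Fin (k ^ d), S := by
          refine Finset.sum_congr rfl fun u _ => ?_
          rw [Finset.sum_congr rfl fun v (_ : v ∈ univ) => Esig2 θ u v]
          exact Esum_u hk (θ ^ 2) u
      _ = n * S := by
          rw [Finset.sum_const, nsmul_eq_mul, Finset.card_univ, Fintype.card_fin, hndef]
          push_cast
          ring
  -- variance identity
  have hvar : ∑ ω₂ : BO2 k d, Wt θ ω₂ * (Ysum ω₂ - μ) ^ 2 = n * S - μ ^ 2 := by
    have hexp : ∀ ω₂ : BO2 k d, Wt θ ω₂ * (Ysum ω₂ - μ) ^ 2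
        = Wt θ ω₂ * Ysum ω₂ ^ 2 - 2 * μ * (Wt θ ω₂ * Ysum ω₂) + μ ^ 2 * Wt θ ω₂ :=
      fun ω₂ => by ring
    rw [Finset.sum_congr rfl fun ω₂ _ => hexp ω₂, Finset.sum_add_distrib,
      Finset.sum_sub_distrib, ← Finset.mul_sum, ← Finset.mul_sum, hEY, hEY2, EW]
    ring
  -- Chebyshev
  have hcheb : P * μ ^ 2 ≤ n * S - μ ^ 2 := by
    rw [← hvar, hPdef, Finset.sum_mul]
    refine Finset.sum_le_sum fun ω₂ _ => ?_
    by_cases h : Ysum ω₂ ≤ 0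
    · rw [if_pos h]
      have h2 : μ ^ 2 ≤ (Ysum ω₂ - μ) ^ 2 := by nlinarith
      exact mul_le_mul_of_nonneg_left h2 (hW0 ω₂)
    · rw [if_neg h, zero_mul]
      exact mul_nonneg (hW0 ω₂) (sq_nonneg _)
  -- bounding S by a geometric sum
  have hSbound : S ≤ ∑ r ∈ range (d + 1), q ^ r := by
    rw [Finset.sum_range_succ', pow_zero]
    have hterm : ∀ s ∈ range d, ((k : ℝ) ^ (s + 1) - (k : ℝ) ^ s) * (θ ^ 2) ^ (s + 1)
        ≤ q ^ (s + 1) := by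
      intro s _
      have hq1 : q ^ (s + 1) = (k : ℝ) ^ (s + 1) * (θ ^ 2) ^ (s + 1) := by
        rw [hqdef, mul_pow]
      have hkn : (0 : ℝ) ≤ (k : ℝ) ^ s := by positivity
      have htn : (0 : ℝ) ≤ (θ ^ 2) ^ (s + 1) := by positivity
      nlinarith
    calc S ≤ 1 + ∑ s ∈ range d, q ^ (s + 1) := by
          rw [hSdef]
          exact add_le_add_right (Finset.sum_le_sum hterm) 1
      _ = ∑ s ∈ range d, q ^ (s + 1) + 1 := by ring
  have hgeom : (∑ r ∈ range (d + 1), q ^ r) * (q - 1) = q ^ (d + 1) - 1 :=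
    geom_sum_mul q (d + 1)
  have hqd : 0 < q ^ d := pow_pos (by linarith) d
  have hμ2 : μ ^ 2 = n * q ^ d := by
    have h1 : q ^ d = (k : ℝ) ^ d * (θ ^ 2) ^ d := by rw [hqdef, mul_pow]
    have h2 : (θ ^ d) ^ 2 = (θ ^ 2) ^ d := by rw [← pow_mul, ← pow_mul, Nat.mul_comm]
    calc μ ^ 2 = n * (n * (θ ^ d) ^ 2) := by rw [hμdef]; ring
      _ = n * ((k : ℝ) ^ d * (θ ^ 2) ^ d) := by rw [h2, hndef]
      _ = n * q ^ d := by rw [h1]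
  have hkey : (n * S - μ ^ 2) * (q - 1) ≤ μ ^ 2 := by
    have hstep : (S - q ^ d) * (q - 1) ≤ q ^ d := by
      have h1 : S * (q - 1) ≤ q ^ (d + 1) - 1 := by
        calc S * (q - 1) ≤ (∑ r ∈ range (d + 1), q ^ r) * (q - 1) :=
              mul_le_mul_of_nonneg_right hSbound (by linarith)
          _ = q ^ (d + 1) - 1 := hgeom
      have h2 : q ^ (d + 1) = q ^ d * q := pow_succ q d
      nlinarith
    calc (n * S - μ ^ 2) * (q - 1) = n * ((S - q ^ d) * (q - 1)) := by rw [hμ2]; ring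
      _ ≤ n * q ^ d := mul_le_mul_of_nonneg_left hstep (le_of_lt hn)
      _ = μ ^ 2 := hμ2.symm
  have hPfinal : P ≤ 1 / (θ ^ 2 * (k : ℝ) - 1) := by
    have hqq : θ ^ 2 * (k : ℝ) - 1 = q - 1 := by rw [hqdef]; ring
    have hd1 : (0 : ℝ) < θ ^ 2 * (k : ℝ) - 1 := by rw [hqq]; linarith
    rw [le_div_iff₀ hd1, hqq]
    have h3 : (P * (q - 1)) * μ ^ 2 ≤ 1 * μ ^ 2 := by
      calc (P * (q - 1)) * μ ^ 2 = (P * μ ^ 2) * (q - 1) := by ring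
        _ ≤ (n * S - μ ^ 2) * (q - 1) := mul_le_mul_of_nonneg_right hcheb (by linarith)
        _ ≤ μ ^ 2 := hkey
        _ = 1 * μ ^ 2 := (one_mul _).symm
    exact le_of_mul_le_mul_right h3 (pow_pos hμ 2)
  rw [hnum, hden]
  have hdiv : (1 / 2 * P) / (1 / 2) = P := by ring
  rw [hdiv]
  exact hPfinal
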